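/- With the setup of the temporal branching process on the infinite n-ary tree with parameter p ∈ (0,1], the expected total number of reachable vertices satisfies E[∑_{ℓ≥0} Z_ℓ] = ∑_{ℓ≥0} (np)^ℓ/ℓ! = e^{np}; in particular the reachable set is almost surely finite. -/

import Mathlib

open MeasureTheory ProbabilityTheory ENNReal

/-- Vertices at depth `ℓ` of the infinite rooted `n`-ary tree are encoded by
`w : Fin ℓ → Fin n` (the sequence of child choices); the edge above the vertex
encoded by a nonempty list `l : List (Fin n)` carries the label `U l`. The vertex `w`
is reachable iff the labels along its root-path are increasing and all at most `p`. -/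
def TemporalReachable {Ω : Type*} (n ℓ : ℕ) (p : ℝ) (U : List (Fin n) → Ω → ℝ)
    (ω : Ω) (w : Fin ℓ → Fin n) : Prop :=
  (StrictMono fun k : Fin ℓ => U ((List.ofFn w).take (k + 1)) ω) ∧
    ∀ k : Fin ℓ, U ((List.ofFn w).take (k + 1)) ω ≤ p

/-! A vertex at depth `ℓ` is reached iff the labels of the `ℓ` edges on its root path form an
increasing tuple in `[0, p]`. These edges are distinct (their addresses are prefixes of different
lengths), so the labels are i.i.d. uniform and the probability is the volume `p ^ ℓ / ℓ!` of the
ordered simplex, computed by slicing along the last, largest, coordinate. Summing over the `n ^ ℓ`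
vertices gives `E Z_ℓ = (n p) ^ ℓ / ℓ!`, monotone convergence gives `E ∑ Z_ℓ = e ^ (n p) < ∞`,
and a random variable of finite mean is finite almost surely. -/

open Set

lemma Fin.strictMono_snoc {α : Type*} [Preorder α] {ℓ : ℕ} {y : Fin ℓ → α} {a : α} :
    StrictMono (Fin.snoc y a : Fin (ℓ + 1) → α) ↔ StrictMono y ∧ ∀ i, y i < a := by
  simpa [Fin.insertNth_last', Fin.castSucc_lt_last] using
    Fin.strictMono_insertNth_iff (Fin.last ℓ) a y

def orderedTuples (ℓ : ℕ) (s : Set ℝ) : Set (Fin ℓ → ℝ) :=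
  {x | StrictMono x ∧ ∀ i, x i ∈ s}

lemma snoc_mem_orderedTuples {ℓ : ℕ} {s : Set ℝ} {a : ℝ} {y : Fin ℓ → ℝ} :
    (Fin.snoc y a : Fin (ℓ + 1) → ℝ) ∈ orderedTuples (ℓ + 1) s ↔
      a ∈ s ∧ y ∈ orderedTuples ℓ (s ∩ Iio a) := by
  simp only [orderedTuples, mem_ofPred_eq, Fin.strictMono_snoc, Fin.forall_fin_succ',
    Fin.snoc_castSucc, Fin.snoc_last, mem_inter_iff, mem_Iio, forall_and]
  tauto

lemma measurableSet_orderedTuples (ℓ : ℕ) {s : Set ℝ} (hs : MeasurableSet s) :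
    MeasurableSet (orderedTuples ℓ s) := by
  have : orderedTuples ℓ s =
      (⋂ i, ⋂ j, ⋂ (_ : i < j), {x | x i < x j}) ∩ ⋂ i, (fun x => x i) ⁻¹' s := by
    ext x; simp [orderedTuples, StrictMono]
  rw [this]
  exact .inter (.iInter fun i => .iInter fun j => .iInter fun _ =>
      measurableSet_lt (measurable_pi_apply i) (measurable_pi_apply j))
    (.iInter fun i => measurable_pi_apply i hs)

lemma volume_orderedTuples_succ (ℓ : ℕ) {s : Set ℝ} (hs : MeasurableSet s) :
    volume (orderedTuples (ℓ + 1) s) = ∫⁻ a in s, volume (orderedTuples ℓ (s ∩ Iio a)) := by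
  have e := (volume_preserving_piFinSuccAbove (fun _ : Fin (ℓ + 1) => ℝ) (Fin.last ℓ)).symm
  rw [← e.measure_preimage (measurableSet_orderedTuples _ hs).nullMeasurableSet,
    Measure.volume_eq_prod, Measure.prod_apply (e.measurable (measurableSet_orderedTuples _ hs)),
    ← lintegral_indicator hs]
  congr 1 with a
  by_cases ha : a ∈ s <;>
    simp [ha, Fin.snocEquiv, snoc_mem_orderedTuples, MeasurableEquiv.piFinSuccAbove_symm_apply,
      preimage]

lemma lintegral_Icc_pow_div_factorial (ℓ : ℕ) {t : ℝ} (ht : 0 ≤ t) :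
    ∫⁻ a in Icc 0 t, ENNReal.ofReal (a ^ ℓ / ℓ.factorial) =
      ENNReal.ofReal (t ^ (ℓ + 1) / (ℓ + 1).factorial) := by
  rw [← ofReal_integral_eq_lintegral_ofReal
      (((continuous_pow ℓ).div_const _).integrableOn_Icc)
      ((ae_restrict_mem measurableSet_Icc).mono fun a ha => by have := ha.1; positivity),
    integral_Icc_eq_integral_Ioc, ← intervalIntegral.integral_of_le ht,
    intervalIntegral.integral_div, integral_pow]
  congr 1
  rw [Nat.factorial_succ]
  push_cast
  field_simp
  ring

lemma volume_orderedTuples_Ico (ℓ : ℕ) {t : ℝ} (ht : 0 ≤ t) :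
    volume (orderedTuples ℓ (Ico 0 t)) = ENNReal.ofReal (t ^ ℓ / ℓ.factorial) := by
  induction ℓ generalizing t with
  | zero => simp [orderedTuples, Subsingleton.strictMono, volume_pi]
  | succ ℓ ih =>
    rw [volume_orderedTuples_succ ℓ measurableSet_Ico, setLIntegral_congr Ico_ae_eq_Icc,
      ← lintegral_Icc_pow_div_factorial ℓ ht]
    refine setLIntegral_congr_fun measurableSet_Icc fun a ha => ?_
    rw [Ico_inter_Iio, min_eq_right ha.2, ih ha.1]

lemma volume_orderedTuples_Icc (ℓ : ℕ) {t : ℝ} (ht : 0 ≤ t) :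
    volume (orderedTuples ℓ (Icc 0 t)) = ENNReal.ofReal (t ^ ℓ / ℓ.factorial) := by
  cases ℓ with
  | zero => simp [orderedTuples, Subsingleton.strictMono, volume_pi]
  | succ ℓ =>
    rw [volume_orderedTuples_succ ℓ measurableSet_Icc, ← lintegral_Icc_pow_div_factorial ℓ ht]
    refine setLIntegral_congr_fun measurableSet_Icc fun a ha => ?_
    rw [show Icc 0 t ∩ Iio a = Ico 0 a by grind, volume_orderedTuples_Ico ℓ ha.1]

lemma orderedTuples_inter_pi (ℓ : ℕ) (s t : Set ℝ) :
    orderedTuples ℓ s ∩ univ.pi (fun _ => t) = orderedTuples ℓ (s ∩ t) := by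
  ext x
  simp [orderedTuples, forall_and, and_assoc]

lemma pi_uniform_orderedTuples_Iic (ℓ : ℕ) {p : ℝ} (hp0 : 0 ≤ p) (hp1 : p ≤ 1) :
    Measure.pi (fun _ : Fin ℓ => volume.restrict (Icc (0 : ℝ) 1)) (orderedTuples ℓ (Iic p)) =
      ENNReal.ofReal (p ^ ℓ / ℓ.factorial) := by
  rw [← Measure.restrict_pi_pi, ← volume_pi,
    Measure.restrict_apply (measurableSet_orderedTuples ℓ measurableSet_Iic),
    orderedTuples_inter_pi, show Iic p ∩ Icc 0 1 = Icc 0 p by grind,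
    volume_orderedTuples_Icc ℓ hp0]

lemma List.take_succ_ofFn_injective {α : Type*} {ℓ : ℕ} (w : Fin ℓ → α) :
    Function.Injective fun k : Fin ℓ => (List.ofFn w).take (k + 1) := by
  intro k k' h
  have := congrArg List.length h
  simp only [List.length_take, List.length_ofFn] at this
  omega

lemma natCard_subtype_eq_sum_indicator {Ω α : Type*} [Fintype α] (P : α → Ω → Prop) (ω : Ω) :
    (Nat.card {a // P a ω} : ℝ≥0∞) = ∑ a, {ω | P a ω}.indicator 1 ω := by
  classical
  rw [Nat.card_eq_fintype_card, Fintype.card_subtype, Finset.card_filter]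
  push_cast
  simp [Set.indicator_apply]

lemma measurable_natCard_subtype {Ω α : Type*} [MeasurableSpace Ω] [Fintype α]
    {P : α → Ω → Prop} (hP : ∀ a, MeasurableSet {ω | P a ω}) :
    Measurable fun ω => (Nat.card {a // P a ω} : ℝ≥0∞) := by
  simp only [natCard_subtype_eq_sum_indicator]
  exact Finset.measurable_sum _ fun a _ => measurable_one.indicator (hP a)

lemma lintegral_natCard_subtype {Ω α : Type*} [MeasurableSpace Ω] (μ : Measure Ω) [Fintype α]
    {P : α → Ω → Prop} (hP : ∀ a, MeasurableSet {ω | P a ω}) :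
    ∫⁻ ω, (Nat.card {a // P a ω} : ℝ≥0∞) ∂μ = ∑ a, μ {ω | P a ω} := by
  simp only [natCard_subtype_eq_sum_indicator]
  rw [lintegral_finsetSum _ fun a _ => measurable_one.indicator (hP a)]
  exact Finset.sum_congr rfl fun a _ => lintegral_indicator_one (hP a)

section TemporalReachable

variable {Ω : Type*} {n ℓ : ℕ} {p : ℝ} {U : List (Fin n) → Ω → ℝ}

lemma setOf_temporalReachable (w : Fin ℓ → Fin n) :
    {ω | TemporalReachable n ℓ p U ω w} =
      (fun ω (k : Fin ℓ) => U ((List.ofFn w).take (k + 1)) ω) ⁻¹' orderedTuples ℓ (Iic p) :=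
  rfl

lemma measurableSet_temporalReachable [MeasurableSpace Ω] (hmeas : ∀ l, Measurable (U l))
    (w : Fin ℓ → Fin n) : MeasurableSet {ω | TemporalReachable n ℓ p U ω w} := by
  rw [setOf_temporalReachable]
  exact measurable_pi_lambda _ (fun k => hmeas _)
    (measurableSet_orderedTuples ℓ measurableSet_Iic)

lemma measure_temporalReachable [MeasurableSpace Ω] (μ : Measure Ω) [IsProbabilityMeasure μ]
    (hp0 : 0 ≤ p) (hp1 : p ≤ 1) (hmeas : ∀ l, Measurable (U l)) (hindep : iIndepFun U μ)
    (hunif : ∀ l, μ.map (U l) = volume.restrict (Icc 0 1)) (w : Fin ℓ → Fin n) :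
    μ {ω | TemporalReachable n ℓ p U ω w} = ENNReal.ofReal (p ^ ℓ / ℓ.factorial) := by
  have hlaw : μ.map (fun ω (k : Fin ℓ) => U ((List.ofFn w).take (k + 1)) ω) =
      Measure.pi fun _ : Fin ℓ => volume.restrict (Icc (0 : ℝ) 1) := by
    rw [(iIndepFun_iff_map_fun_eq_pi_map fun k => (hmeas _).aemeasurable).1
      (hindep.precomp (List.take_succ_ofFn_injective w))]
    simp only [hunif]
  rw [setOf_temporalReachable, ← Measure.map_apply (measurable_pi_lambda _ fun k => hmeas _)
    (measurableSet_orderedTuples ℓ measurableSet_Iic), hlaw,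
    pi_uniform_orderedTuples_Iic ℓ hp0 hp1]

lemma lintegral_card_temporalReachable [MeasurableSpace Ω] (μ : Measure Ω)
    [IsProbabilityMeasure μ] (hp0 : 0 ≤ p) (hp1 : p ≤ 1) (hmeas : ∀ l, Measurable (U l))
    (hindep : iIndepFun U μ)
    (hunif : ∀ l, μ.map (U l) = volume.restrict (Icc 0 1)) :
    ∫⁻ ω, (Nat.card {w : Fin ℓ → Fin n // TemporalReachable n ℓ p U ω w} : ℝ≥0∞) ∂μ =
      ENNReal.ofReal ((n * p) ^ ℓ / ℓ.factorial) := by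
  simp only [lintegral_natCard_subtype μ (measurableSet_temporalReachable hmeas),
    measure_temporalReachable μ hp0 hp1 hmeas hindep hunif, Finset.sum_const, Finset.card_univ,
    Fintype.card_fun, Fintype.card_fin, nsmul_eq_mul]
  rw [← ENNReal.ofReal_natCast, ← ENNReal.ofReal_mul (by positivity)]
  congr 1
  push_cast
  ring

end TemporalReachable

lemma ENNReal.tsum_ofReal_pow_div_factorial {x : ℝ} (hx : 0 ≤ x) :
    ∑' ℓ : ℕ, ENNReal.ofReal (x ^ ℓ / ℓ.factorial) = ENNReal.ofReal (Real.exp x) := by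
  rw [← ENNReal.ofReal_tsum_of_nonneg (fun ℓ => by positivity)
    (Real.summable_pow_div_factorial x), Real.exp_eq_exp_ℝ,
    (NormedSpace.expSeries_div_hasSum_exp x).tsum_eq]

theorem expected_total_progeny_general {Ω : Type*} [MeasurableSpace Ω]
    (μ : Measure Ω) [IsProbabilityMeasure μ] (n : ℕ)
    (p : ℝ) (hp0 : 0 < p) (hp1 : p ≤ 1)
    (U : List (Fin n) → Ω → ℝ) (hmeas : ∀ l, Measurable (U l))
    (hindep : iIndepFun U μ)
    (hunif : ∀ l, Measure.map (U l) μ = (volume : Measure ℝ).restrict (Set.Icc 0 1)) :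
    (∫⁻ ω, ∑' ℓ : ℕ,
        (Nat.card {w : Fin ℓ → Fin n // TemporalReachable n ℓ p U ω w} : ℝ≥0∞) ∂μ =
        ∑' ℓ : ℕ, ENNReal.ofReal ((n * p) ^ ℓ / Nat.factorial ℓ)) ∧
      (∑' ℓ : ℕ, ENNReal.ofReal ((n * p) ^ ℓ / Nat.factorial ℓ) =
        ENNReal.ofReal (Real.exp (n * p))) ∧
      ∀ᵐ ω ∂μ, (∑' ℓ : ℕ,
        (Nat.card {w : Fin ℓ → Fin n // TemporalReachable n ℓ p U ω w} : ℝ≥0∞)) < ⊤ := by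
  have hZ (ℓ : ℕ) : Measurable fun ω =>
      (Nat.card {w : Fin ℓ → Fin n // TemporalReachable n ℓ p U ω w} : ℝ≥0∞) :=
    measurable_natCard_subtype (measurableSet_temporalReachable hmeas)
  have hmean : ∫⁻ ω, ∑' ℓ : ℕ,
      (Nat.card {w : Fin ℓ → Fin n // TemporalReachable n ℓ p U ω w} : ℝ≥0∞) ∂μ =
        ∑' ℓ : ℕ, ENNReal.ofReal ((n * p) ^ ℓ / Nat.factorial ℓ) := by
    rw [lintegral_tsum fun ℓ => (hZ ℓ).aemeasurable]
    exact tsum_congr fun ℓ => lintegral_card_temporalReachable μ hp0.le hp1 hmeas hindep hunif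
  have hexp := ENNReal.tsum_ofReal_pow_div_factorial (x := n * p) (by positivity)
  refine ⟨hmean, hexp, ae_lt_top (Measurable.tsum hZ) ?_⟩
  rw [hmean, hexp]
  exact ENNReal.ofReal_ne_top

theorem expected_total_progeny {Ω : Type*} [MeasurableSpace Ω]
    (μ : Measure Ω) [IsProbabilityMeasure μ] (n : ℕ) (hn : 1 ≤ n)
    (p : ℝ) (hp0 : 0 < p) (hp1 : p ≤ 1)
    (U : List (Fin n) → Ω → ℝ) (hmeas : ∀ l, Measurable (U l))
    (hindep : iIndepFun U μ)
    (hunif : ∀ l, Measure.map (U l) μ = (volume : Measure ℝ).restrict (Set.Icc 0 1)) :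
    (∫⁻ ω, ∑' ℓ : ℕ,
        (Nat.card {w : Fin ℓ → Fin n // TemporalReachable n ℓ p U ω w} : ℝ≥0∞) ∂μ =
        ∑' ℓ : ℕ, ENNReal.ofReal ((n * p) ^ ℓ / Nat.factorial ℓ)) ∧
      (∑' ℓ : ℕ, ENNReal.ofReal ((n * p) ^ ℓ / Nat.factorial ℓ) =
        ENNReal.ofReal (Real.exp (n * p))) ∧
      ∀ᵐ ω ∂μ, (∑' ℓ : ℕ,
        (Nat.card {w : Fin ℓ → Fin n // TemporalReachable n ℓ p U ω w} : ℝ≥0∞)) < ⊤ :=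
  expected_total_progeny_general μ n p hp0 hp1 U hmeas hindep hunif
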